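/- Let $\xi : \mathbb{R}^d \to \mathbb{R}$ be positively homogeneous of degree 1, strictly convex in directions (meaning $\xi(x+y) < \xi(x) + \xi(y)$ unless $x, y$ are parallel), and differentiable at $a \neq 0$. Then for every $x \in \mathbb{R}^d$ not parallel to $a$ and every $n \ge 1$ with $a - x/n \neq 0$: $\xi(na) - \xi(na - x) < x \cdot \nabla \xi(a)$. -/

import Mathlib

open RealInnerProductSpace


private lemma line_deriv {d : ℕ} (ξ : EuclideanSpace ℝ (Fin d) → ℝ)
    (g a v : EuclideanSpace ℝ (Fin d)) (hgrad : HasGradientAt ξ g a) :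
    HasDerivAt (fun t : ℝ => ξ (a + t • v)) ⟪v, g⟫ 0 := by
  have hc : HasDerivAt (fun t : ℝ => a + t • v) v 0 := by
    simpa using ((hasDerivAt_id (0:ℝ)).smul_const v).const_add a
  have := (by simpa using hgrad.hasFDerivAt :
      HasFDerivAt ξ _ (a + (0:ℝ) • v)).comp_hasDerivAt 0 hc
  rw [real_inner_comm]; simpa [Function.comp_def, mul_comm] using this

private lemma euler {d : ℕ} (ξ : EuclideanSpace ℝ (Fin d) → ℝ)
    (hhom : ∀ (x : EuclideanSpace ℝ (Fin d)) (l : ℝ), 0 ≤ l → ξ (l • x) = l * ξ x)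
    (g a : EuclideanSpace ℝ (Fin d)) (hgrad : HasGradientAt ξ g a) :
    ⟪a, g⟫ = ξ a := by
  have h1 := line_deriv ξ g a a hgrad
  have h3 : HasDerivAt (fun t : ℝ => (1+t) * ξ a) (ξ a) 0 := by
    simpa using ((hasDerivAt_id (0:ℝ)).const_add 1).mul_const (ξ a)
  have h2 : (fun t : ℝ => (1+t) * ξ a) =ᶠ[nhds 0] (fun t : ℝ => ξ (a + t • a)) := by
    filter_upwards [Ioo_mem_nhds (by norm_num : (-1:ℝ) < 0) one_pos] with t ht
    have h0 : (0:ℝ) ≤ 1 + t := by linarith [ht.1]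
    have : a + t • a = (1 + t) • a := by module
    rw [this, hhom a (1+t) h0]
  exact (h1.unique (h3.congr_of_eventuallyEq h2.symm))

private lemma subgrad {d : ℕ} (ξ : EuclideanSpace ℝ (Fin d) → ℝ)
    (hhom : ∀ (x : EuclideanSpace ℝ (Fin d)) (l : ℝ), 0 ≤ l → ξ (l • x) = l * ξ x)
    (hstrict : ∀ x y : EuclideanSpace ℝ (Fin d),
      (¬ ∃ c : ℝ, y = c • x ∨ x = c • y) → ξ (x + y) < ξ x + ξ y)
    (g a : EuclideanSpace ℝ (Fin d)) (ha : a ≠ 0)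
    (hgrad : HasGradientAt ξ g a) (y : EuclideanSpace ℝ (Fin d))
    (hya : ¬ ∃ c : ℝ, y = c • a) :
    ⟪y - a, g⟫ ≤ ξ y - ξ a := by
  set φ : ℝ → ℝ := fun t => ξ (a + t • (y - a)) with hφ
  have hder := line_deriv ξ g a (y - a) hgrad
  have hslope : Filter.Tendsto (slope φ 0) (nhdsWithin 0 {(0:ℝ)}ᶜ) (nhds ⟪y - a, g⟫) :=
    hasDerivAt_iff_tendsto_slope.mp hder
  have hslope' : Filter.Tendsto (slope φ 0) (nhdsWithin 0 (Set.Ioi 0)) (nhds ⟪y - a, g⟫) :=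
    hslope.mono_left (nhdsWithin_mono _ (fun t ht => ne_of_gt ht))
  refine le_of_tendsto hslope' ?_
  filter_upwards [Ioo_mem_nhdsGT_of_mem (by simp : (0:ℝ) ∈ Set.Ico 0 1)] with t ht
  have ht0 : (0:ℝ) < t := ht.1
  have ht1 : t < 1 := ht.2
  have key : φ t ≤ (1 - t) * ξ a + t * ξ y := by
    have heq : a + t • (y - a) = (1 - t) • a + t • y := by module
    have hnp : ¬ ∃ c : ℝ, t • y = c • ((1 - t) • a) ∨ (1 - t) • a = c • (t • y) := by
      rintro ⟨c, hc | hc⟩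
      · apply hya
        refine ⟨t⁻¹ * (c * (1 - t)), ?_⟩
        have := congrArg (fun z => t⁻¹ • z) hc
        simpa [smul_smul, ne_of_gt ht0, mul_assoc] using this
      · have hk : a = ((1 - t)⁻¹ * (c * t)) • y := by
          have := congrArg (fun z => (1 - t)⁻¹ • z) hc
          simpa [smul_smul, ne_of_gt (by linarith : (0:ℝ) < 1 - t)] using this
        set k := (1 - t)⁻¹ * (c * t) with hkdef
        rcases eq_or_ne k 0 with h0 | h0
        · exact ha (by simpa [h0] using hk)
        · apply hya
          refine ⟨k⁻¹, ?_⟩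
          have := congrArg (fun z => k⁻¹ • z) hk
          simpa [smul_smul, h0] using this.symm
    have := le_of_lt (hstrict ((1 - t) • a) (t • y) hnp)
    rw [hhom a (1 - t) (by linarith), hhom y t (le_of_lt ht0)] at this
    rw [hφ]; simpa [heq] using this
  have hφ0 : φ 0 = ξ a := by simp [hφ]
  have : slope φ 0 t = (φ t - ξ a) / t := by
    rw [slope_def_field, hφ0, sub_zero]
  rw [this, div_le_iff₀ ht0]
  nlinarith [key]

/-- If `ξ : ℝᵈ → ℝ` is positively homogeneous of degree one, strictly
convex in directions (`ξ(x+y) < ξ x + ξ y` unless `x` and `y` are parallel), and has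
gradient `g` at `a ≠ 0`, then for every `x` not parallel to `a` and every `n ≥ 1` with
`a - x/n ≠ 0` one has `ξ(n a) - ξ(n a - x) < ⟪x, g⟫`. -/
theorem strict_convexity_gradient_bound {d : ℕ}
    (ξ : EuclideanSpace ℝ (Fin d) → ℝ)
    (hhom : ∀ (x : EuclideanSpace ℝ (Fin d)) (l : ℝ), 0 ≤ l → ξ (l • x) = l * ξ x)
    (hstrict : ∀ x y : EuclideanSpace ℝ (Fin d),
      (¬ ∃ c : ℝ, y = c • x ∨ x = c • y) → ξ (x + y) < ξ x + ξ y)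
    (a g : EuclideanSpace ℝ (Fin d)) (ha : a ≠ 0)
    (hgrad : HasGradientAt ξ g a) :
    ∀ x : EuclideanSpace ℝ (Fin d), (¬ ∃ c : ℝ, x = c • a) →
      ∀ n : ℕ, 1 ≤ n → a - (1 / (n : ℝ)) • x ≠ 0 →
        ξ ((n : ℝ) • a) - ξ ((n : ℝ) • a - x) < ⟪x, g⟫ := by
  intro x hx n hn _
  have hn0 : (0:ℝ) < (n:ℝ) := by exact_mod_cast Nat.lt_of_lt_of_le Nat.zero_lt_one hn
  set u : EuclideanSpace ℝ (Fin d) := a - (1 / (n : ℝ)) • x with hu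
  have hxu : x = (n:ℝ) • (a - u) := by
    have hc : ((n:ℝ)) • ((1/(n:ℝ)) • x) = x := by
      rw [smul_smul]; field_simp; simp
    rw [hu, smul_sub, smul_sub, hc]; module
  -- u is not parallel to a
  have hupar : ¬ ∃ c : ℝ, u = c • a := by
    rintro ⟨c, hc⟩
    exact hx ⟨(n:ℝ) * (1 - c), by rw [hxu, hc]; module⟩
  -- a + u not parallel to a
  have haupar : ¬ ∃ c : ℝ, a + u = c • a := by
    rintro ⟨c, hc⟩
    exact hupar ⟨c - 1, by rw [sub_smul, ← hc]; module⟩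
  -- a, u not parallel (both ways)
  have hnp : ¬ ∃ c : ℝ, u = c • a ∨ a = c • u := by
    rintro ⟨c, hc | hc⟩
    · exact hupar ⟨c, hc⟩
    · rcases eq_or_ne c 0 with h0 | h0
      · exact ha (by simpa [h0] using hc)
      · apply hupar
        refine ⟨c⁻¹, ?_⟩
        have := congrArg (fun z => c⁻¹ • z) hc
        simpa [smul_smul, h0] using this.symm
  have heuler := euler ξ hhom g a hgrad
  have hsub := subgrad ξ hhom hstrict g a ha hgrad (a + u) haupar
  have hlt := hstrict a u hnp
  -- ⟪u, g⟫ < ξ u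
  have hug : ⟪u, g⟫ < ξ u := by
    have h1 : ⟪u, g⟫ ≤ ξ (a + u) - ξ a := by
      have : (a + u) - a = u := by module
      rwa [this] at hsub
    linarith
  -- rewrite ⟪u, g⟫
  have hinner : ⟪u, g⟫ = ξ a - (1 / (n:ℝ)) * ⟪x, g⟫ := by
    rw [hu, inner_sub_left, real_inner_smul_left, heuler]
  -- final
  have hna : ξ ((n:ℝ) • a) = (n:ℝ) * ξ a := hhom a (n:ℝ) (le_of_lt hn0)
  have hnu : ξ ((n:ℝ) • a - x) = (n:ℝ) * ξ u := by
    have : (n:ℝ) • a - x = (n:ℝ) • u := by rw [hxu]; module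
    rw [this, hhom u (n:ℝ) (le_of_lt hn0)]
  rw [hna, hnu]
  rw [hinner] at hug
  set I : ℝ := ⟪x, g⟫ with hI
  have h := mul_lt_mul_of_pos_left hug hn0
  have hc : (n:ℝ) * (ξ a - 1/(n:ℝ) * I) = (n:ℝ) * ξ a - I := by
    field_simp
  rw [hc] at h
  linarith
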